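/- Let X be a random variable such that (1/σ²)X follows a chi-squared distribution with p degrees of freedom, σ > 0. Then for every x > 0, P(X ≥ σ²·p·(1 + 2√(x/p) + 2x/p)) ≤ e^{-x}. -/

import Mathlib

open Finset MeasureTheory ProbabilityTheory
open scoped BigOperators ENNReal

/-- The chi-squared distribution with `p` degrees of freedom, realized as the
law of the sum of squares of `p` independent standard Gaussians. -/
noncomputable def chiSquared (p : ℕ) : Measure ℝ :=
  Measure.map (fun g : Fin p → ℝ => ∑ i, (g i) ^ 2)
    (Measure.pi fun _ : Fin p => gaussianReal 0 1)

/-!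
Chernoff's bound with the moment generating function `(1 - 2t)^{-p/2}` of `χ²_p`, evaluated at
`t = r / (1 + 2r)` where `r = √(x/p)`. After taking logarithms the claim reduces to
`log (1 + 2r) ≤ 2r(1 + r)/(1 + 2r)`, which is `log y ≤ sinh (log y)` for `y = 1 + 2r`.
-/

open Real

lemma log_le_sub_inv_div_two {y : ℝ} (hy : 1 ≤ y) : log y ≤ (y - y⁻¹) / 2 := by
  rw [← sinh_log (by linarith)]
  exact self_le_sinh_iff.2 (log_nonneg hy)

lemma exp_neg_mul_mul_one_sub_two_mul_rpow_le {p r : ℝ} (hp : 0 ≤ p) (hr : 0 ≤ r) :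
    exp (-(r / (1 + 2 * r)) * (p * (1 + 2 * r + 2 * r ^ 2))) *
        (1 - 2 * (r / (1 + 2 * r))) ^ (-(p / 2)) ≤ exp (-(p * r ^ 2)) := by
  have hpos : 0 < 1 + 2 * r := by linarith
  have hinv : 1 - 2 * (r / (1 + 2 * r)) = (1 + 2 * r)⁻¹ := by field_simp; ring
  rw [hinv, inv_rpow hpos.le, rpow_neg hpos.le, inv_inv, rpow_def_of_pos hpos, ← exp_add,
    exp_le_exp]
  calc -(r / (1 + 2 * r)) * (p * (1 + 2 * r + 2 * r ^ 2)) + log (1 + 2 * r) * (p / 2)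
      ≤ -(r / (1 + 2 * r)) * (p * (1 + 2 * r + 2 * r ^ 2))
          + (1 + 2 * r - (1 + 2 * r)⁻¹) / 2 * (p / 2) := by
        gcongr
        exact log_le_sub_inv_div_two (by linarith)
    _ = -(p * r ^ 2) := by field_simp; ring

lemma gaussianPDFReal_mul_exp_mul_sq (t y : ℝ) :
    gaussianPDFReal 0 1 y * exp (t * y ^ 2) = (√(2 * π))⁻¹ * exp (-(1 / 2 - t) * y ^ 2) := by
  rw [gaussianPDFReal, mul_assoc, ← exp_add]
  push_cast
  ring_nf

lemma integrable_exp_mul_sq_gaussianReal {t : ℝ} (ht : t < 1 / 2) :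
    Integrable (fun y => exp (t * y ^ 2)) (gaussianReal 0 1) := by
  rw [gaussianReal_of_var_ne_zero 0 one_ne_zero,
    integrable_withDensity_iff (measurable_gaussianPDF 0 1)
      (ae_of_all _ fun _ => gaussianPDF_lt_top)]
  simp_rw [toReal_gaussianPDF, mul_comm (exp _), gaussianPDFReal_mul_exp_mul_sq]
  exact (integrable_exp_neg_mul_sq (by linarith)).const_mul _

lemma integral_exp_mul_sq_gaussianReal {t : ℝ} (ht : t < 1 / 2) :
    ∫ y, exp (t * y ^ 2) ∂gaussianReal 0 1 = (1 - 2 * t) ^ (-(1 / 2 : ℝ)) := by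
  simp_rw [integral_gaussianReal_eq_integral_smul one_ne_zero, smul_eq_mul,
    gaussianPDFReal_mul_exp_mul_sq, integral_const_mul, integral_gaussian]
  have h2t : 1 - 2 * t = 2 * (1 / 2 - t) := by ring
  have hs : 0 < 1 / 2 - t := by linarith
  rw [h2t, rpow_neg (by positivity), ← sqrt_eq_rpow, sqrt_div' _ hs.le, sqrt_mul zero_le_two,
    sqrt_mul zero_le_two]
  field_simp

section ChiSquared

variable {ι : Type*} [Fintype ι] {p : ℕ}

lemma measurable_sum_sq : Measurable fun g : ι → ℝ => ∑ i, g i ^ 2 := by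
  fun_prop

lemma exp_mul_sum_sq (t : ℝ) (g : ι → ℝ) :
    exp (t * ∑ i, g i ^ 2) = ∏ i, exp (t * g i ^ 2) := by
  rw [Finset.mul_sum, exp_sum]

instance isProbabilityMeasure_chiSquared : IsProbabilityMeasure (chiSquared p) :=
  Measure.isProbabilityMeasure_map measurable_sum_sq.aemeasurable

lemma integrable_exp_mul_chiSquared {t : ℝ} (ht : t < 1 / 2) :
    Integrable (fun y => exp (t * y)) (chiSquared p) := by
  rw [chiSquared, integrable_map_measure (by fun_prop) measurable_sum_sq.aemeasurable]
  simp_rw [Function.comp_def, exp_mul_sum_sq]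
  exact Integrable.fintype_prod fun _ => integrable_exp_mul_sq_gaussianReal ht

lemma mgf_chiSquared {t : ℝ} (ht : t < 1 / 2) :
    mgf id (chiSquared p) t = (1 - 2 * t) ^ (-(p / 2 : ℝ)) := by
  rw [chiSquared, mgf_map measurable_sum_sq.aemeasurable (by fun_prop), mgf]
  simp_rw [Function.comp_def, id, exp_mul_sum_sq]
  rw [integral_fintype_prod_eq_pow (fun y => exp (t * y ^ 2)), Fintype.card_fin,
    integral_exp_mul_sq_gaussianReal ht, ← rpow_mul_natCast (by linarith)]
  ring_nf

lemma chiSquared_Ici_le {r : ℝ} (hr : 0 ≤ r) :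
    chiSquared p (Set.Ici (p * (1 + 2 * r + 2 * r ^ 2))) ≤
      ENNReal.ofReal (exp (-(p * r ^ 2))) := by
  set t := r / (1 + 2 * r)
  have ht : t < 1 / 2 := by rw [div_lt_iff₀ (by linarith)]; linarith
  have hchernoff := measure_ge_le_exp_mul_mgf (μ := chiSquared p) (X := id)
    (p * (1 + 2 * r + 2 * r ^ 2)) (by positivity) (integrable_exp_mul_chiSquared ht)
  rw [mgf_chiSquared ht] at hchernoff
  rw [← ofReal_measureReal]
  exact ENNReal.ofReal_le_ofReal
    (hchernoff.trans (exp_neg_mul_mul_one_sub_two_mul_rpow_le p.cast_nonneg hr))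

end ChiSquared

theorem laurent_massart_tail_general {Ω : Type*} [MeasurableSpace Ω]
    (P : Measure Ω)
    (p : ℕ) (hp : 0 < p) (σ : ℝ) (hσ : 0 < σ)
    (X : Ω → ℝ)
    (hX : Measure.map (fun ω => X ω / σ ^ 2) P = chiSquared p)
    (x : ℝ) (hx : 0 < x) :
    P {ω | σ ^ 2 * p * (1 + 2 * Real.sqrt (x / p) + 2 * x / p) ≤ X ω} ≤
      ENNReal.ofReal (Real.exp (-x)) := by
  set r := √(x / p)
  have hr_sq : x / p = r ^ 2 := (sq_sqrt (by positivity)).symm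
  have hx_eq : x = p * r ^ 2 := by
    rw [← hr_sq, mul_div_cancel₀ _ (by positivity)]
  have hset : {ω | σ ^ 2 * p * (1 + 2 * r + 2 * x / p) ≤ X ω}
      = (fun ω => X ω / σ ^ 2) ⁻¹' Set.Ici (p * (1 + 2 * r + 2 * r ^ 2)) := by
    ext ω
    rw [Set.mem_ofPred_eq, Set.mem_preimage, Set.mem_Ici, le_div_iff₀ (by positivity),
      mul_div_assoc, hr_sq, mul_comm _ (σ ^ 2), mul_assoc]
  have hmeas : AEMeasurable (fun ω => X ω / σ ^ 2) P :=
    .of_map_ne_zero (by rw [hX]; exact IsProbabilityMeasure.ne_zero _)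
  rw [hset, ← Measure.map_apply_of_aemeasurable hmeas measurableSet_Ici, hX, hx_eq]
  exact chiSquared_Ici_le (sqrt_nonneg _)

/-- Laurent–Massart tail bound. If `X/σ² ~ χ²_p` then for every
`x > 0`, `P(X ≥ σ²·p·(1 + 2√(x/p) + 2x/p)) ≤ e^{-x}`. -/
theorem laurent_massart_tail {Ω : Type*} [MeasurableSpace Ω]
    (P : Measure Ω) [IsProbabilityMeasure P]
    (p : ℕ) (hp : 0 < p) (σ : ℝ) (hσ : 0 < σ)
    (X : Ω → ℝ) (hXm : Measurable X)
    (hX : Measure.map (fun ω => X ω / σ ^ 2) P = chiSquared p)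
    (x : ℝ) (hx : 0 < x) :
    P {ω | σ ^ 2 * p * (1 + 2 * Real.sqrt (x / p) + 2 * x / p) ≤ X ω} ≤
      ENNReal.ofReal (Real.exp (-x)) :=
  laurent_massart_tail_general P p hp σ hσ X hX x hx
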